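/- arXiv:2508.01061 — 2 statements merged into one kernel-verified Lean document; each statement's English description precedes it below -/
import Mathlib

section
/- Let Q be a G-equivariant symmetry on H and let B_Q = { M Q M* + K : M ∈ L(H) invertible and G-equivariant, K ∈ L(H) compact, selfadjoint and G-equivariant }. Then B_Q is both open and closed in the set FS^i(H)^G of all G-equivariant selfadjoint Fredholm operators whose essential spectrum meets both (−∞,0) and (0,∞), equipped with the subspace topology of the operator norm topology; consequently B_Q is a union of connected components of FS^i(H)^G. -/
open scoped RealInnerProductSpace

/-- A bounded selfadjoint operator is Fredholm iff its kernel is finite-dimensional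
and its range is closed. -/
def IsFredholmOp {H : Type*} [NormedAddCommGroup H] [InnerProductSpace ℝ H]
    (T : H →L[ℝ] H) : Prop :=
  FiniteDimensional ℝ (LinearMap.ker (T : H →ₗ[ℝ] H)) ∧ IsClosed (LinearMap.range (T : H →ₗ[ℝ] H) : Set H)

/-- The essential spectrum of a bounded selfadjoint operator: the set of real `μ` such that
`μ - T` is not Fredholm. -/
def essSpectrum {H : Type*} [NormedAddCommGroup H] [InnerProductSpace ℝ H]
    (T : H →L[ℝ] H) : Set ℝ :=
  {μ : ℝ | ¬ IsFredholmOp (μ • (1 : H →L[ℝ] H) - T)}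

/-- Equivariance of a bounded operator with respect to an orthogonal representation `ρ`. -/
def IsEquivariant {H : Type*} [NormedAddCommGroup H] [InnerProductSpace ℝ H]
    {G : Type*} [Group G] (ρ : G →* (H ≃ₗᵢ[ℝ] H)) (T : H →L[ℝ] H) : Prop :=
  ∀ (g : G) (u : H), T (ρ g u) = ρ g (T u)

/-- The set of operators of the form `M Q M* + K` with `M` invertible and `G`-equivariant and
`K` compact, selfadjoint and `G`-equivariant. -/
def cogredientOrbit {H : Type*} [NormedAddCommGroup H] [InnerProductSpace ℝ H] [CompleteSpace H]
    {G : Type*} [Group G] (ρ : G →* (H ≃ₗᵢ[ℝ] H)) (Q : H →L[ℝ] H) : Set (H →L[ℝ] H) :=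
  {T | ∃ M K : H →L[ℝ] H, IsUnit M ∧ IsEquivariant ρ M ∧
    IsCompactOperator ⇑K ∧ IsSelfAdjoint K ∧ IsEquivariant ρ K ∧
    T = M * Q * ContinuousLinearMap.adjoint M + K}

/-- The set `FS^i(H)^G` of `G`-equivariant selfadjoint Fredholm operators whose essential
spectrum meets both `(-∞,0)` and `(0,∞)`. -/
def FSiG {H : Type*} [NormedAddCommGroup H] [InnerProductSpace ℝ H] [CompleteSpace H]
    {G : Type*} [Group G] (ρ : G →* (H ≃ₗᵢ[ℝ] H)) : Set (H →L[ℝ] H) :=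
  {T | IsSelfAdjoint T ∧ IsEquivariant ρ T ∧ IsFredholmOp T ∧
    (essSpectrum T ∩ Set.Iio (0:ℝ)).Nonempty ∧ (essSpectrum T ∩ Set.Ioi (0:ℝ)).Nonempty}

/-!
Orbits of symmetries are open: for a symmetry `Q` and a small selfadjoint equivariant `E`, the
invertible operator `Q + E` has a polar decomposition `Q + E = S |Q + E|` with `S` a symmetry,
`|Q + E| = M²` and `Q + E = M S M*`; and `X = 1 + S Q` is invertible and satisfies `S X = X Q`,
so the unitary part of `X` conjugates `Q` to `S`. All square roots are limits of polynomial
iterations, hence stay in the commutant of the representation. Orbits are closed as well: a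
selfadjoint equivariant Fredholm `T` differs from the invertible `T + P` (`P` the projection onto
the finite-dimensional kernel) by a compact operator, so `T` lies in the orbit of the symmetry
of `T + P`, and two orbits of symmetries that meet coincide.
-/

open Set Filter Topology Metric ContinuousLinearMap
open scoped Ring

section SquareRoot

variable {A : Type*} [NormedRing A] [NormedAlgebra ℝ A] [CompleteSpace A]

/-- The last clause says that `l` is the limit of the iteration `x ↦ (t + x²) / 2` from `0`. -/
theorem exists_one_sub_mul_self_eq_one_sub {t : A} (ht : ‖t‖ < 1) :
    ∃ l : A, (1 - l) * (1 - l) = 1 - t ∧ ‖l‖ ≤ ‖t‖ ∧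
      ∀ C : Set A, IsClosed C → 0 ∈ C → (∀ x ∈ C, (2⁻¹ : ℝ) • (t + x * x) ∈ C) → l ∈ C := by
  set f : A → A := fun x ↦ (2⁻¹ : ℝ) • (t + x * x)
  have hnorm (z : A) : ‖(2⁻¹ : ℝ) • z‖ = 2⁻¹ * ‖z‖ := by simp [norm_smul]
  have hmaps : MapsTo f (closedBall 0 ‖t‖) (closedBall 0 ‖t‖) := by
    intro x hx
    rw [mem_closedBall_zero_iff] at hx ⊢
    have := (norm_add_le t (x * x)).trans (add_le_add_right (norm_mul_le x x) _)
    simp only [f, hnorm]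
    nlinarith [norm_nonneg x]
  have hcontr : ContractingWith ‖t‖₊ (hmaps.restrict f _ _) := by
    refine ⟨ht, LipschitzWith.of_dist_le_mul fun x y ↦ ?_⟩
    have hx := mem_closedBall_zero_iff.1 x.2
    have hy := mem_closedBall_zero_iff.1 y.2
    have hxy : f x - f y = (2⁻¹ : ℝ) • ((x : A) * (x - y) + (x - y) * y) := by
      simp only [f, ← smul_sub]
      congr 1
      noncomm_ring
    rw [Subtype.dist_eq, Subtype.dist_eq, dist_eq_norm, dist_eq_norm, MapsTo.val_restrict_apply,
      MapsTo.val_restrict_apply, hxy, hnorm, coe_nnnorm]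
    have := (norm_add_le _ _).trans
      (add_le_add (norm_mul_le (x : A) (x - y)) (norm_mul_le (x - y : A) y))
    nlinarith [norm_nonneg ((x : A) - y)]
  obtain ⟨l, hl, hl_fixed, hlim, -⟩ := hcontr.exists_fixedPoint'
    isClosed_closedBall.isComplete hmaps (mem_closedBall_self (norm_nonneg t)) (edist_ne_top _ _)
  refine ⟨l, ?_, mem_closedBall_zero_iff.1 hl, fun C hC h0 hf ↦
    hC.mem_of_tendsto hlim (Eventually.of_forall fun n ↦ (MapsTo.iterate hf n) h0)⟩
  have htwice : l + l = t + l * l := by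
    conv_lhs => rw [← hl_fixed.eq]
    simp only [f, ← two_smul ℝ, smul_smul]
    norm_num
  calc (1 - l) * (1 - l) = 1 - (l + l) + l * l := by noncomm_ring
    _ = 1 - t := by rw [htwice]; abel

end SquareRoot

theorem Commute.ringInverse_right {M₀ : Type*} [MonoidWithZero M₀] {a b : M₀}
    (h : Commute a b) : Commute a b⁻¹ʳ := by
  by_cases hb : IsUnit b
  · obtain ⟨u, rfl⟩ := hb
    rw [Ring.inverse_unit]
    exact h.units_inv_right
  · rw [Ring.inverse_non_unit _ hb]
    exact .zero_right a

section Operators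

variable {H : Type*} [NormedAddCommGroup H] [InnerProductSpace ℝ H]

theorem isCoercive_innerSL_comp_iff {T : H →L[ℝ] H} :
    IsCoercive (innerSL ℝ ∘L T) ↔ ∃ m, 0 < m ∧ ∀ x, m * ‖x‖ ^ 2 ≤ ⟪T x, x⟫ := by
  simp only [IsCoercive, sq, mul_assoc]
  rfl

theorem isCoercive_one_add_of_norm_lt_one {F : H →L[ℝ] H} (hF : ‖F‖ < 1) :
    IsCoercive (innerSL ℝ ∘L (1 + F)) := by
  refine isCoercive_innerSL_comp_iff.2 ⟨1 - ‖F‖, sub_pos.2 hF, fun x ↦ ?_⟩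
  have := neg_le_of_abs_le (abs_real_inner_le_norm (F x) x)
  rw [add_apply, one_apply_eq_self, inner_add_left, real_inner_self_eq_norm_sq]
  nlinarith [norm_nonneg x, mul_le_mul_of_nonneg_right (F.le_opNorm x) (norm_nonneg x)]

theorem IsCoercive.add_of_inner_nonneg {P T : H →L[ℝ] H} (hT : IsCoercive (innerSL ℝ ∘L T))
    (hP : ∀ x, 0 ≤ ⟪P x, x⟫) : IsCoercive (innerSL ℝ ∘L (P + T)) := by
  obtain ⟨m, hm, hmT⟩ := isCoercive_innerSL_comp_iff.1 hT
  refine isCoercive_innerSL_comp_iff.2 ⟨m, hm, fun x ↦ ?_⟩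
  rw [add_apply, inner_add_left]
  linarith [hP x, hmT x]

theorem isCompactOperator_starProjection {K : Submodule ℝ H} [FiniteDimensional ℝ K] :
    IsCompactOperator K.starProjection :=
  ((isCompactOperator_id_iff_finiteDimensional (𝕜 := ℝ) (E := K)).2 ‹_› |>.clm_comp
    K.subtypeL).comp_clm K.orthogonalProjectionOnto

variable [CompleteSpace H]

theorem IsSelfAdjoint.norm_le_of_abs_inner_le {T : H →L[ℝ] H} (hT : IsSelfAdjoint T) {k : ℝ}
    (hk : 0 ≤ k) (h : ∀ x, |⟪T x, x⟫| ≤ k * ‖x‖ ^ 2) : ‖T‖ ≤ k := by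
  rw [T.norm_eq_iSup_rayleighQuotient hT.isSymmetric]
  refine ciSup_le fun x ↦ ?_
  rcases eq_or_ne x 0 with rfl | hx
  · simpa using hk
  · rw [rayleighQuotient, reApplyInnerSelf_apply, abs_div, abs_sq, div_le_iff₀ (by positivity)]
    simpa using h x

theorem IsSelfAdjoint.norm_le_one_of_mul_self_eq_one {Q : H →L[ℝ] H} (hQ : IsSelfAdjoint Q)
    (hQQ : Q * Q = 1) : ‖Q‖ ≤ 1 := by
  have h : ‖Q‖ * ‖Q‖ ≤ 1 := by
    rw [← CStarRing.norm_star_mul_self, hQ.star_eq, hQQ, one_def]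
    exact norm_id_le
  nlinarith [norm_nonneg Q]

theorem isUnit_of_isCoercive {T : H →L[ℝ] H} (hT : IsCoercive (innerSL ℝ ∘L T)) : IsUnit T := by
  have hB : InnerProductSpace.continuousLinearMapOfBilin (innerSL ℝ ∘L T) = T := by
    ext v
    refine ext_inner_right ℝ fun w ↦ ?_
    rw [InnerProductSpace.continuousLinearMapOfBilin_apply]
    rfl
  rw [isUnit_iff_bijective, ← hB]
  exact ⟨LinearMap.ker_eq_bot.1 hT.ker_eq_bot, LinearMap.range_eq_top.1 hT.range_eq_top⟩

theorem isCoercive_star_mul_self {T : H →L[ℝ] H} (hT : IsUnit T) :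
    IsCoercive (innerSL ℝ ∘L (star T * T)) := by
  refine isCoercive_innerSL_comp_iff.2 ⟨(‖T⁻¹ʳ‖ ^ 2 + 1)⁻¹, by positivity, fun x ↦ ?_⟩
  have hx : ‖x‖ ≤ ‖T⁻¹ʳ‖ * ‖T x‖ := by
    calc ‖x‖ = ‖T⁻¹ʳ (T x)‖ := by rw [← mul_apply_eq_comp, Ring.inverse_mul_cancel _ hT]; rfl
      _ ≤ ‖T⁻¹ʳ‖ * ‖T x‖ := T⁻¹ʳ.le_opNorm _
  rw [mul_apply_eq_comp, star_eq_adjoint, adjoint_inner_left, real_inner_self_eq_norm_sq,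
    inv_mul_le_iff₀ (by positivity)]
  nlinarith [norm_nonneg x, norm_nonneg (T x), mul_nonneg (norm_nonneg T⁻¹ʳ) (norm_nonneg (T x))]

theorem IsSelfAdjoint.exists_sqrt_one_sub {t : H →L[ℝ] H} (ht : IsSelfAdjoint t) (ht1 : ‖t‖ < 1) :
    ∃ y, y * y = 1 - t ∧ IsSelfAdjoint y ∧ IsCoercive (innerSL ℝ ∘L y) ∧
      ∀ z, Commute z t → Commute z y := by
  obtain ⟨l, hl, hlt, hinv⟩ := exists_one_sub_mul_self_eq_one_sub ht1
  refine ⟨1 - l, hl, ?_, ?_, fun z hz ↦ ?_⟩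
  · refine .sub (.one _) (hinv {x | IsSelfAdjoint x} (isClosed_eq continuous_star continuous_id)
      (.zero _) fun x hx ↦ ?_)
    exact .smul (.all _) (ht.add (by simpa only [sq] using IsSelfAdjoint.pow hx 2))
  · refine isCoercive_innerSL_comp_iff.2 ⟨1 - ‖t‖, sub_pos.2 ht1, fun x ↦ ?_⟩
    have := (real_inner_le_norm (l x) x).trans
      (mul_le_mul_of_nonneg_right (l.le_opNorm x) (norm_nonneg x))
    rw [sub_apply, inner_sub_left, one_apply_eq_self, real_inner_self_eq_norm_sq]
    nlinarith [norm_nonneg x]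
  · refine .sub_right (.one_right z) (hinv {x | Commute z x}
      (isClosed_eq (continuous_const_mul z) (continuous_mul_const z)) (.zero_right z)
      fun x hx ↦ ?_)
    exact (hz.add_right (hx.mul_right hx)).smul_right _

theorem IsSelfAdjoint.exists_sqrt_of_isCoercive {P : H →L[ℝ] H} (hP : IsSelfAdjoint P)
    (hPc : IsCoercive (innerSL ℝ ∘L P)) :
    ∃ R, R * R = P ∧ IsSelfAdjoint R ∧ IsCoercive (innerSL ℝ ∘L R) ∧
      ∀ z, Commute z P → Commute z R := by
  obtain ⟨m, hm, hmP⟩ := isCoercive_innerSL_comp_iff.1 hPc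
  set c := (‖P‖ + m)⁻¹
  have hc : 0 < c := by positivity
  have hcP : c * ‖P‖ + c * m = 1 := by rw [← mul_add, inv_mul_cancel₀ (by positivity)]
  -- the numerical range of `c • P` lies in `[c m, 1 - c m]`
  have ht : ‖1 - c • P‖ ≤ 1 - c * m := by
    refine ((IsSelfAdjoint.one _).sub (.smul (.all c) hP)).norm_le_of_abs_inner_le
      (by nlinarith [norm_nonneg P]) fun x ↦ ?_
    have hupper : ⟪P x, x⟫ ≤ ‖P‖ * ‖x‖ ^ 2 := by
      have := (real_inner_le_norm (P x) x).trans
        (mul_le_mul_of_nonneg_right (P.le_opNorm x) (norm_nonneg x))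
      nlinarith
    rw [sub_apply, smul_apply, one_apply_eq_self, inner_sub_left, real_inner_smul_left,
      real_inner_self_eq_norm_sq, abs_le]
    constructor <;> nlinarith [hmP x, sq_nonneg ‖x‖, mul_le_mul_of_nonneg_left hupper hc.le]
  obtain ⟨y, hy, hysa, hyc, hycomm⟩ :=
    ((IsSelfAdjoint.one _).sub (.smul (.all c) hP)).exists_sqrt_one_sub
      (ht.trans_lt (by nlinarith))
  refine ⟨(√c)⁻¹ • y, ?_, .smul (.all _) hysa, ?_, fun z hz ↦
    (hycomm z ((Commute.one_right z).sub_right (hz.smul_right c))).smul_right _⟩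
  · rw [smul_mul_smul_comm, hy, sub_sub_cancel, smul_smul, ← mul_inv, Real.mul_self_sqrt hc.le,
      inv_mul_cancel₀ hc.ne', one_smul]
  · obtain ⟨m', hm', hm'y⟩ := isCoercive_innerSL_comp_iff.1 hyc
    refine isCoercive_innerSL_comp_iff.2 ⟨(√c)⁻¹ * m', by positivity, fun x ↦ ?_⟩
    rw [smul_apply, real_inner_smul_left, mul_assoc]
    exact mul_le_mul_of_nonneg_left (hm'y x) (by positivity)

theorem IsSelfAdjoint.exists_polar_decomposition {A : H →L[ℝ] H} (hA : IsSelfAdjoint A)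
    (hAu : IsUnit A) :
    ∃ M S : H →L[ℝ] H, IsSelfAdjoint M ∧ IsCoercive (innerSL ℝ ∘L M) ∧ IsSelfAdjoint S ∧
      S * S = 1 ∧ Commute S M ∧ S * (M * M) = A ∧
      ∀ z, Commute z A → Commute z M ∧ Commute z S := by
  obtain ⟨N, hNN, hNsa, hNc, hNcomm⟩ :=
    (IsSelfAdjoint.star_mul_self A).exists_sqrt_of_isCoercive (isCoercive_star_mul_self hAu)
  rw [hA.star_eq] at hNN hNcomm
  obtain ⟨M, hMM, hMsa, hMc, hMcomm⟩ := hNsa.exists_sqrt_of_isCoercive hNc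
  have hNu : IsUnit N := isUnit_of_isCoercive hNc
  have hAN : Commute A N := hNcomm A ((Commute.refl A).mul_right (.refl A))
  have hcomm (z : H →L[ℝ] H) (hz : Commute z A) : Commute z M ∧ Commute z (A * N⁻¹ʳ) :=
    have hzN := hNcomm z (hz.mul_right hz)
    ⟨hMcomm z hzN, hz.mul_right hzN.ringInverse_right⟩
  refine ⟨M, A * N⁻¹ʳ, hMsa, hMc, ?_, ?_, (hcomm M (hMcomm A hAN).symm).2.symm, ?_, hcomm⟩
  · rw [IsSelfAdjoint, star_mul, hA.star_eq, hNsa.ringInverse.star_eq]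
    exact hAN.ringInverse_right.eq.symm
  · rw [hAN.ringInverse_right.symm.mul_mul_mul_comm, ← hNN, mul_assoc,
      Ring.mul_inverse_cancel_left _ _ hNu, Ring.mul_inverse_cancel _ hNu]
  · rw [hMM, mul_assoc, Ring.inverse_mul_cancel _ hNu, mul_one]

theorem Submodule.commute_starProjection {K : Submodule ℝ H} [K.HasOrthogonalProjection]
    {g : H →L[ℝ] H} (hg : ∀ x ∈ K, g x ∈ K) (hg' : ∀ x ∈ K, star g x ∈ K) :
    Commute g K.starProjection := by
  refine ContinuousLinearMap.ext fun x ↦ ?_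
  rw [mul_apply_eq_comp, mul_apply_eq_comp]
  refine (K.eq_starProjection_of_mem_orthogonal (hg _ (K.starProjection_apply_mem x)) ?_).symm
  rw [← map_sub, Submodule.mem_orthogonal]
  intro w hw
  rw [← adjoint_inner_left, ← star_eq_adjoint]
  exact Submodule.inner_right_of_mem_orthogonal (hg' w hw) (K.sub_starProjection_mem_orthogonal x)

theorem IsSelfAdjoint.orthogonal_ker_eq_range {T : H →L[ℝ] H} (hT : IsSelfAdjoint T)
    (hcl : IsClosed (LinearMap.range (T : H →ₗ[ℝ] H) : Set H)) :
    (LinearMap.ker (T : H →ₗ[ℝ] H))ᗮ = LinearMap.range (T : H →ₗ[ℝ] H) := by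
  rw [← hT.isStarNormal.orthogonal_range, Submodule.orthogonal_orthogonal_eq_closure,
    hcl.submodule_topologicalClosure_eq]

theorem IsSelfAdjoint.isUnit_add_starProjection_ker {T : H →L[ℝ] H} (hT : IsSelfAdjoint T)
    (hcl : IsClosed (LinearMap.range (T : H →ₗ[ℝ] H) : Set H)) :
    IsUnit (T + (LinearMap.ker (T : H →ₗ[ℝ] H)).starProjection) := by
  set K := LinearMap.ker (T : H →ₗ[ℝ] H)
  set P := K.starProjection
  have hTP (x : H) : T (P x) = 0 := K.starProjection_apply_mem x
  have hPP (x : H) : P (P x) = P x := K.starProjection_eq_self_iff.2 (K.starProjection_apply_mem x)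
  have hrange (x : H) : T x ∈ Kᗮ := hT.orthogonal_ker_eq_range hcl ▸ LinearMap.mem_range_self _ x
  rw [isUnit_iff_bijective]
  constructor
  · refine (injective_iff_map_eq_zero (T + P)).2 fun x hx ↦ ?_
    rw [add_apply] at hx
    have hTx : T x = 0 := by
      have h0 := K.inner_right_of_mem_orthogonal (K.starProjection_apply_mem x) (hrange x)
      rw [← inner_self_eq_zero (𝕜 := ℝ)]
      nth_rw 1 [eq_neg_of_add_eq_zero_left hx]
      rw [inner_neg_left, h0, neg_zero]
    have hxK : x ∈ K := hTx
    rw [← K.starProjection_eq_self_iff.2 hxK, ← hx, hTx, zero_add]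
  · intro v
    obtain ⟨x, hx⟩ := hT.orthogonal_ker_eq_range hcl ▸ K.sub_starProjection_mem_orthogonal v
    refine ⟨x - P x + P v, ?_⟩
    rw [coe_coe] at hx
    simp only [add_apply, map_add, map_sub, hTP, hx, hPP]
    abel

end Operators

section Commutant

variable {H : Type*} [NormedAddCommGroup H] [InnerProductSpace ℝ H] [CompleteSpace H]
  {s : Set (H →L[ℝ] H)}

theorem mem_centralizer_of_commute {A B : H →L[ℝ] H} (hA : A ∈ StarSubalgebra.centralizer ℝ s)
    (h : ∀ z, Commute z A → Commute z B) : B ∈ StarSubalgebra.centralizer ℝ s := by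
  rw [← SetLike.mem_coe, StarSubalgebra.coe_centralizer, Set.mem_centralizer_iff] at hA ⊢
  exact fun g hg ↦ h g (hA g hg)

theorem ringInverse_mem_centralizer {A : H →L[ℝ] H} (hA : A ∈ StarSubalgebra.centralizer ℝ s) :
    A⁻¹ʳ ∈ StarSubalgebra.centralizer ℝ s :=
  mem_centralizer_of_commute hA fun _ hz ↦ hz.ringInverse_right

theorem exists_conj_eq_of_intertwining {S Q X : H →L[ℝ] H} (hS : IsSelfAdjoint S)
    (hQ : IsSelfAdjoint Q) (hXu : IsUnit X) (hX : X ∈ StarSubalgebra.centralizer ℝ s)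
    (hSX : S * X = X * Q) :
    ∃ U ∈ StarSubalgebra.centralizer ℝ s, IsUnit U ∧ U * Q * star U = S := by
  obtain ⟨R, hRR, hRsa, hRc, hRcomm⟩ :=
    (IsSelfAdjoint.star_mul_self X).exists_sqrt_of_isCoercive (isCoercive_star_mul_self hXu)
  have hRu : IsUnit R := isUnit_of_isCoercive hRc
  have hQR : Commute Q R⁻¹ʳ := by
    refine (hRcomm Q ?_).ringInverse_right
    have hXS : star X * S = Q * star X := by
      simpa only [star_mul, hS.star_eq, hQ.star_eq] using congrArg star hSX
    change Q * (star X * X) = star X * X * Q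
    rw [← mul_assoc, ← hXS, mul_assoc, hSX, mul_assoc]
  have hRR' : R⁻¹ʳ * R⁻¹ʳ * (star X * X) = 1 := by
    rw [← hRR, mul_assoc, Ring.inverse_mul_cancel_left _ _ hRu, Ring.inverse_mul_cancel _ hRu]
  -- the unitary part `X |X|⁻¹` of `X` conjugates `Q` to `S`
  refine ⟨X * R⁻¹ʳ, mul_mem hX (ringInverse_mem_centralizer
      (mem_centralizer_of_commute (mul_mem (star_mem hX) hX) hRcomm)),
    hXu.mul hRu.ringInverse, ?_⟩
  obtain ⟨u, rfl⟩ := hXu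
  refine (Units.mul_left_inj u).1 ?_
  calc ↑u * R⁻¹ʳ * Q * star (↑u * R⁻¹ʳ) * ↑u = ↑u * Q * (R⁻¹ʳ * R⁻¹ʳ * (star ↑u * ↑u)) := by
        rw [star_mul, hRsa.ringInverse.star_eq, mul_assoc (u : H →L[ℝ] H) R⁻¹ʳ Q, ← hQR.eq]
        noncomm_ring
    _ = S * ↑u := by rw [hRR', mul_one, hSX]

theorem exists_conj_eq_add_of_norm_lt_one {Q E : H →L[ℝ] H} (hQ : IsSelfAdjoint Q)
    (hQQ : Q * Q = 1) (hQs : Q ∈ StarSubalgebra.centralizer ℝ s) (hE : IsSelfAdjoint E)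
    (hEs : E ∈ StarSubalgebra.centralizer ℝ s) (hE1 : ‖E‖ < 1) :
    ∃ M ∈ StarSubalgebra.centralizer ℝ s, IsUnit M ∧ M * Q * star M = Q + E := by
  have hQn := hQ.norm_le_one_of_mul_self_eq_one hQQ
  have hEQ : IsCoercive (innerSL ℝ ∘L (1 + E * Q)) :=
    isCoercive_one_add_of_norm_lt_one ((norm_mul_le E Q).trans_lt (by nlinarith [norm_nonneg E]))
  have hAu : IsUnit (Q + E) := by
    rw [show Q + E = (1 + E * Q) * Q by rw [add_mul, one_mul, mul_assoc, hQQ, mul_one]]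
    exact (isUnit_of_isCoercive hEQ).mul ⟨⟨Q, Q, hQQ, hQQ⟩, rfl⟩
  obtain ⟨M, S, hMsa, hMc, hSsa, hSS, hSM, hSMM, hcomm⟩ :=
    (hQ.add hE).exists_polar_decomposition hAu
  have hAs : Q + E ∈ StarSubalgebra.centralizer ℝ s := add_mem hQs hEs
  have hMs := mem_centralizer_of_commute hAs fun z hz ↦ (hcomm z hz).1
  have hSs := mem_centralizer_of_commute hAs fun z hz ↦ (hcomm z hz).2
  -- `1 + S Q` is invertible since `M² (1 + S Q) = M² + (1 + E Q)` is coercive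
  have hXu : IsUnit (1 + S * Q) := by
    have h : M * M * (1 + S * Q) = M * M + (1 + E * Q) := by
      rw [mul_add, mul_one, ← mul_assoc, ← (hSM.mul_right hSM).eq, hSMM, add_mul, hQQ]
    have hpos (x : H) : 0 ≤ ⟪(M * M) x, x⟫ := by
      have hMx := hMsa.isSymmetric (M x) x
      rw [coe_coe] at hMx
      rw [mul_apply_eq_comp, hMx]
      exact real_inner_self_nonneg
    obtain ⟨u, hu⟩ := (isUnit_of_isCoercive hMc).mul (isUnit_of_isCoercive hMc)
    rw [← hu] at h hpos
    have := isUnit_of_isCoercive (hEQ.add_of_inner_nonneg hpos)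
    rw [← h] at this
    exact (Units.isUnit_units_mul u _).1 this
  obtain ⟨U, hUs, hUu, hUQ⟩ := exists_conj_eq_of_intertwining hSsa hQ hXu
    (add_mem (one_mem _) (mul_mem hSs hQs))
    (by rw [mul_add, add_mul, ← mul_assoc, hSS, mul_assoc, hQQ]; noncomm_ring)
  refine ⟨M * U, mul_mem hMs hUs, (isUnit_of_isCoercive hMc).mul hUu, ?_⟩
  rw [star_mul, hMsa.star_eq, show M * U * Q * (star U * M) = M * (U * Q * star U) * M by
    noncomm_ring, hUQ, mul_assoc, hSM.eq, ← mul_assoc, ← (hSM.mul_right hSM).eq, hSMM]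

theorem starProjection_ker_mem_centralizer {T : H →L[ℝ] H}
    (hT : T ∈ StarSubalgebra.centralizer ℝ s) :
    (LinearMap.ker (T : H →ₗ[ℝ] H)).starProjection ∈ StarSubalgebra.centralizer ℝ s := by
  have hinv {g : H →L[ℝ] H} (hg : g * T = T * g) :
      ∀ x ∈ LinearMap.ker (T : H →ₗ[ℝ] H), g x ∈ LinearMap.ker (T : H →ₗ[ℝ] H) := by
    intro x hx
    rw [LinearMap.mem_ker, coe_coe] at hx ⊢
    rw [← mul_apply_eq_comp, ← hg, mul_apply_eq_comp, hx, map_zero]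
  rw [StarSubalgebra.mem_centralizer_iff] at hT ⊢
  intro g hg
  obtain ⟨h₁, h₂⟩ := hT g hg
  exact ⟨(Submodule.commute_starProjection (hinv h₁) (hinv h₂)).eq,
    (Submodule.commute_starProjection (hinv h₂) (by simpa only [star_star] using hinv h₁)).eq⟩

end Commutant

section Orbit

variable {H : Type*} [NormedAddCommGroup H] [InnerProductSpace ℝ H] [CompleteSpace H]
  {G : Type*} [Group G] {ρ : G →* (H ≃ₗᵢ[ℝ] H)}

variable (ρ) in
noncomputable def equivariantSubalgebra : StarSubalgebra ℝ (H →L[ℝ] H) :=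
  StarSubalgebra.centralizer ℝ (Set.range fun g ↦ ((ρ g : H ≃L[ℝ] H) : H →L[ℝ] H))

theorem isEquivariant_iff_mem_equivariantSubalgebra {T : H →L[ℝ] H} :
    IsEquivariant ρ T ↔ T ∈ equivariantSubalgebra ρ := by
  have hstar (g : G) :
      star ((ρ g : H ≃L[ℝ] H) : H →L[ℝ] H) = ((ρ g⁻¹ : H ≃L[ℝ] H) : H →L[ℝ] H) := by
    rw [star_eq_adjoint, LinearIsometryEquiv.adjoint_eq_symm, map_inv]
    rfl
  simp only [equivariantSubalgebra, StarSubalgebra.mem_centralizer_iff, Set.forall_mem_range,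
    hstar, ContinuousLinearMap.ext_iff, mul_apply_eq_comp, IsEquivariant]
  exact ⟨fun h g ↦ ⟨fun u ↦ (h g u).symm, fun u ↦ (h g⁻¹ u).symm⟩,
    fun h g u ↦ ((h g).1 u).symm⟩

theorem mem_cogredientOrbit_iff {Q T : H →L[ℝ] H} :
    T ∈ cogredientOrbit ρ Q ↔ ∃ M K : H →L[ℝ] H, IsUnit M ∧ M ∈ equivariantSubalgebra ρ ∧
      IsCompactOperator K ∧ IsSelfAdjoint K ∧ K ∈ equivariantSubalgebra ρ ∧
      T = M * Q * star M + K := by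
  simp only [cogredientOrbit, Set.mem_ofPred_eq, isEquivariant_iff_mem_equivariantSubalgebra,
    star_eq_adjoint]

theorem cogredientOrbit_subset_of_mem {Q₁ Q₂ : H →L[ℝ] H} (h : Q₂ ∈ cogredientOrbit ρ Q₁) :
    cogredientOrbit ρ Q₂ ⊆ cogredientOrbit ρ Q₁ := by
  intro T hT
  obtain ⟨M₁, K₁, hM₁u, hM₁, hK₁c, hK₁sa, hK₁, rfl⟩ := mem_cogredientOrbit_iff.1 h
  obtain ⟨M₂, K₂, hM₂u, hM₂, hK₂c, hK₂sa, hK₂, rfl⟩ := mem_cogredientOrbit_iff.1 hT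
  refine mem_cogredientOrbit_iff.2 ⟨M₂ * M₁, M₂ * K₁ * star M₂ + K₂, hM₂u.mul hM₁u,
    mul_mem hM₂ hM₁, ((hK₁c.comp_clm _).clm_comp _).add hK₂c,
    (hK₁sa.conjugate M₂).add hK₂sa, add_mem (mul_mem (mul_mem hM₂ hK₁) (star_mem hM₂)) hK₂, ?_⟩
  rw [star_mul]
  noncomm_ring

theorem mem_cogredientOrbit_symm {Q T : H →L[ℝ] H} (h : T ∈ cogredientOrbit ρ Q) :
    Q ∈ cogredientOrbit ρ T := by
  obtain ⟨M, K, hMu, hM, hKc, hKsa, hK, rfl⟩ := mem_cogredientOrbit_iff.1 h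
  have hMi := ringInverse_mem_centralizer hM
  refine mem_cogredientOrbit_iff.2 ⟨M⁻¹ʳ, -(M⁻¹ʳ * K * star M⁻¹ʳ), hMu.ringInverse, hMi,
    ((hKc.comp_clm _).clm_comp _).neg, (hKsa.conjugate _).neg,
    neg_mem (mul_mem (mul_mem hMi hK) (star_mem hMi)), ?_⟩
  have hMM : star M * star M⁻¹ʳ = 1 := by
    rw [← star_mul, Ring.inverse_mul_cancel _ hMu, star_one]
  calc Q = M⁻¹ʳ * M * Q * (star M * star M⁻¹ʳ) := by
        rw [Ring.inverse_mul_cancel _ hMu, hMM, one_mul, mul_one]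
    _ = _ := by noncomm_ring

theorem cogredientOrbit_eq_of_mem {Q T : H →L[ℝ] H} (h : T ∈ cogredientOrbit ρ Q) :
    cogredientOrbit ρ T = cogredientOrbit ρ Q :=
  (cogredientOrbit_subset_of_mem h).antisymm
    (cogredientOrbit_subset_of_mem (mem_cogredientOrbit_symm h))

theorem cogredientOrbit_mem_nhdsWithin {Q T : H →L[ℝ] H} (hQ : IsSelfAdjoint Q)
    (hQQ : Q * Q = 1) (hQe : IsEquivariant ρ Q) (hT : T ∈ cogredientOrbit ρ Q) :
    cogredientOrbit ρ Q ∈ 𝓝[{T' | IsSelfAdjoint T' ∧ IsEquivariant ρ T'}] T := by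
  obtain ⟨M, K, hMu, hM, hKc, hKsa, hK, rfl⟩ := mem_cogredientOrbit_iff.1 hT
  have hMi := ringInverse_mem_centralizer hM
  have hQs := isEquivariant_iff_mem_equivariantSubalgebra.1 hQe
  rw [Metric.mem_nhdsWithin_iff]
  refine ⟨(‖M⁻¹ʳ‖ ^ 2 + 1)⁻¹, by positivity, ?_⟩
  rintro T' ⟨hdist, hT'sa, hT'e⟩
  rw [Metric.mem_ball, dist_eq_norm] at hdist
  set Δ := T' - (M * Q * star M + K)
  have hE1 : ‖M⁻¹ʳ * Δ * star M⁻¹ʳ‖ < 1 := by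
    calc ‖M⁻¹ʳ * Δ * star M⁻¹ʳ‖ ≤ ‖M⁻¹ʳ‖ * ‖Δ‖ * ‖star M⁻¹ʳ‖ := norm_mul₃_le
      _ = ‖M⁻¹ʳ‖ ^ 2 * ‖Δ‖ := by rw [(norm_star M⁻¹ʳ :)]; ring
      _ ≤ (‖M⁻¹ʳ‖ ^ 2 + 1) * ‖Δ‖ := by gcongr; linarith
      _ < (‖M⁻¹ʳ‖ ^ 2 + 1) * (‖M⁻¹ʳ‖ ^ 2 + 1)⁻¹ := by gcongr
      _ = 1 := mul_inv_cancel₀ (by positivity)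
  have hΔ : Δ ∈ equivariantSubalgebra ρ :=
    sub_mem (isEquivariant_iff_mem_equivariantSubalgebra.1 hT'e)
      (add_mem (mul_mem (mul_mem hM hQs) (star_mem hM)) hK)
  obtain ⟨M₁, hM₁, hM₁u, hM₁Q⟩ := exists_conj_eq_add_of_norm_lt_one hQ hQQ hQs
    ((hT'sa.sub ((hQ.conjugate M).add hKsa)).conjugate _)
    (mul_mem (mul_mem hMi hΔ) (star_mem hMi)) hE1
  have hQE : Q + M⁻¹ʳ * Δ * star M⁻¹ʳ ∈ cogredientOrbit ρ Q :=
    mem_cogredientOrbit_iff.2 ⟨M₁, 0, hM₁u, hM₁, isCompactOperator_zero, .zero _, zero_mem _,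
      by rw [hM₁Q, add_zero]⟩
  refine cogredientOrbit_subset_of_mem hQE (mem_cogredientOrbit_iff.2
    ⟨M, K, hMu, hM, hKc, hKsa, hK, ?_⟩)
  have hMM : M * M⁻¹ʳ = 1 := Ring.mul_inverse_cancel _ hMu
  have hMM' : star M⁻¹ʳ * star M = 1 := by rw [← star_mul, hMM, star_one]
  calc T' = M * Q * star M + (M * M⁻¹ʳ) * Δ * (star M⁻¹ʳ * star M) + K := by
        simp only [hMM, hMM', one_mul, mul_one, Δ]
        abel
    _ = _ := by noncomm_ring

theorem exists_symmetry_mem_cogredientOrbit {T : H →L[ℝ] H} (hTsa : IsSelfAdjoint T)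
    (hTe : IsEquivariant ρ T) (hTf : IsFredholmOp T) :
    ∃ Q, IsSelfAdjoint Q ∧ Q * Q = 1 ∧ IsEquivariant ρ Q ∧ T ∈ cogredientOrbit ρ Q := by
  obtain ⟨hfin, hcl⟩ := hTf
  set P := (LinearMap.ker (T : H →ₗ[ℝ] H)).starProjection
  have hPsa : IsSelfAdjoint P := isSelfAdjoint_starProjection _
  have hPs : P ∈ equivariantSubalgebra ρ :=
    starProjection_ker_mem_centralizer (isEquivariant_iff_mem_equivariantSubalgebra.1 hTe)
  have hAs : T + P ∈ equivariantSubalgebra ρ :=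
    add_mem (isEquivariant_iff_mem_equivariantSubalgebra.1 hTe) hPs
  obtain ⟨M, S, hMsa, hMc, hSsa, hSS, hSM, hSMM, hcomm⟩ :=
    (hTsa.add hPsa).exists_polar_decomposition (hTsa.isUnit_add_starProjection_ker hcl)
  refine ⟨S, hSsa, hSS, isEquivariant_iff_mem_equivariantSubalgebra.2
    (mem_centralizer_of_commute hAs fun z hz ↦ (hcomm z hz).2), mem_cogredientOrbit_iff.2
    ⟨M, -P, isUnit_of_isCoercive hMc, mem_centralizer_of_commute hAs fun z hz ↦ (hcomm z hz).1,
      isCompactOperator_starProjection.neg, hPsa.neg, neg_mem hPs, ?_⟩⟩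
  rw [hMsa.star_eq, ← hSM.eq, mul_assoc, hSMM]
  abel

theorem isOpen_preimage_cogredientOrbit {Q : H →L[ℝ] H} (hQ : IsSelfAdjoint Q)
    (hQQ : Q * Q = 1) (hQe : IsEquivariant ρ Q) :
    IsOpen (Subtype.val ⁻¹' cogredientOrbit ρ Q : Set (FSiG ρ)) := by
  refine isOpen_iff_mem_nhds.2 fun T hT ↦ ?_
  rw [mem_nhds_subtype_iff_nhdsWithin, Subtype.image_preimage_coe]
  have hsub : FSiG ρ ⊆ {T' | IsSelfAdjoint T' ∧ IsEquivariant ρ T'} :=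
    fun _ hT' ↦ ⟨hT'.1, hT'.2.1⟩
  exact inter_mem self_mem_nhdsWithin
    (nhdsWithin_mono _ hsub (cogredientOrbit_mem_nhdsWithin hQ hQQ hQe hT))

end Orbit

theorem stmt5_general
    {H : Type*} [NormedAddCommGroup H] [InnerProductSpace ℝ H] [CompleteSpace H]
    {G : Type*} [Group G]
    (ρ : G →* (H ≃ₗᵢ[ℝ] H))
    (Q : H →L[ℝ] H)
    (hQsa : IsSelfAdjoint Q) (hQsq : Q * Q = 1) (hQeq : IsEquivariant ρ Q) :
    IsOpen (Subtype.val ⁻¹' cogredientOrbit ρ Q : Set (FSiG ρ)) ∧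
    IsClosed (Subtype.val ⁻¹' cogredientOrbit ρ Q : Set (FSiG ρ)) ∧
    ∀ x : FSiG ρ, x ∈ Subtype.val ⁻¹' cogredientOrbit ρ Q →
      connectedComponent x ⊆ Subtype.val ⁻¹' cogredientOrbit ρ Q := by
  have hopen := isOpen_preimage_cogredientOrbit hQsa hQsq hQeq
  have hclosed : IsClosed (Subtype.val ⁻¹' cogredientOrbit ρ Q : Set (FSiG ρ)) := by
    refine isOpen_compl_iff.1 (isOpen_iff_forall_mem_open.2 fun T hT ↦ ?_)
    obtain ⟨Q', hQ'sa, hQ'sq, hQ'e, hTQ'⟩ :=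
      exists_symmetry_mem_cogredientOrbit T.2.1 T.2.2.1 T.2.2.2.1
    refine ⟨_, fun T' hT'Q' hT'Q ↦ hT ?_, isOpen_preimage_cogredientOrbit hQ'sa hQ'sq hQ'e, hTQ'⟩
    rw [Set.mem_preimage, ← cogredientOrbit_eq_of_mem hT'Q, cogredientOrbit_eq_of_mem hT'Q']
    exact hTQ'
  exact ⟨hopen, hclosed, fun x hx ↦ IsClopen.connectedComponent_subset ⟨hclosed, hopen⟩ hx⟩

theorem stmt5
    {H : Type*} [NormedAddCommGroup H] [InnerProductSpace ℝ H] [CompleteSpace H]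
    [TopologicalSpace.SeparableSpace H]
    {G : Type*} [Group G] [TopologicalSpace G] [IsTopologicalGroup G] [CompactSpace G]
    {EG : Type*} [NormedAddCommGroup EG] [NormedSpace ℝ EG]
    {HG : Type*} [TopologicalSpace HG] {IG : ModelWithCorners ℝ EG HG}
    [ChartedSpace HG G] [LieGroup IG (⊤ : ℕ∞) G]
    (ρ : G →* (H ≃ₗᵢ[ℝ] H)) (hρ : ∀ u : H, Continuous fun g : G => ρ g u)
    (Q : H →L[ℝ] H)
    (hQsa : IsSelfAdjoint Q) (hQsq : Q * Q = 1) (hQeq : IsEquivariant ρ Q) :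
    IsOpen (Subtype.val ⁻¹' cogredientOrbit ρ Q : Set (FSiG ρ)) ∧
    IsClosed (Subtype.val ⁻¹' cogredientOrbit ρ Q : Set (FSiG ρ)) ∧
    ∀ x : FSiG ρ, x ∈ Subtype.val ⁻¹' cogredientOrbit ρ Q →
      connectedComponent x ⊆ Subtype.val ⁻¹' cogredientOrbit ρ Q :=
  stmt5_general ρ Q hQsa hQsq hQeq
end

section
/- Let Q be a symmetry on H, K₀ ∈ L(H) compact and selfadjoint, and suppose L₀ = Q + K₀ is invertible. Let (P_n) be an increasing sequence of finite-rank orthogonal projections on H, each commuting with Q, converging weakly to the identity, and let H_n = range(P_n). Then there exists n₀ ∈ ℕ such that for all n ≥ n₀ and all s ∈ [0,1], the operator s L₀ + (1−s)((I_H − P_n) L₀ (I_H − P_n) + P_n L₀ P_n) is invertible; in particular, for all n ≥ n₀ the compression P_n L₀ P_n, viewed as an operator from H_n to H_n, is invertible. -/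
open scoped RealInnerProductSpace

/-!
Write `R n = 1 - P n`. Because `P n` commutes with `Q`, the pinching
`R n L₀ R n + P n L₀ P n` differs from `L₀ = Q + K₀` only by the off-diagonal part
`P n K₀ R n + R n K₀ P n` of the compact operator. Weak convergence of the projections gives
`‖R n u‖² = ‖u‖² - ⟪P n u, u⟫ → 0`; compactness of `K₀` upgrades this to `‖R n K₀‖ → 0`, and
taking adjoints to `‖K₀ R n‖ → 0`. Hence the pinchings converge to `L₀` in norm. The invertible
operators form an open set, so some ball around `L₀` consists of invertible operators, and since
the ball is convex it eventually contains the whole segment from `L₀` to the pinching. Finally the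
pinching commutes with `P n` and agrees with `P n L₀ P n` on `range (P n)`, so the latter is
bijective there.
-/

open Filter Topology Metric Set

def pinching {R : Type*} [Ring R] (p a : R) : R :=
  (1 - p) * a * (1 - p) + p * a * p

section Pinching

variable {R : Type*} [Ring R] {p : R}

theorem pinching_add (p a b : R) : pinching p (a + b) = pinching p a + pinching p b := by
  simp only [pinching]; noncomm_ring

theorem pinching_eq_sub (p a : R) :
    pinching p a = a - (p * a * (1 - p) + (1 - p) * a * p) := by
  simp only [pinching]; noncomm_ring

theorem IsIdempotentElem.pinching_eq_self_of_commute (hp : IsIdempotentElem p) {q : R}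
    (hpq : Commute p q) : pinching p q = q := by
  have hpq' : Commute (1 - p) q := (Commute.one_left q).sub_left hpq
  calc pinching p q = q * (1 - p) * (1 - p) + q * p * p := by rw [pinching, hpq'.eq, hpq.eq]
    _ = q := by rw [mul_assoc, hp.one_sub.eq, mul_assoc, hp.eq, ← mul_add, sub_add_cancel, mul_one]

theorem IsIdempotentElem.pinching_mul_self (hp : IsIdempotentElem p) (a : R) :
    pinching p a * p = p * a * p := by
  rw [pinching, add_mul, mul_assoc _ (1 - p), hp.one_sub_mul_self, mul_zero, zero_add,
    mul_assoc _ p, hp.eq]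

theorem IsIdempotentElem.commute_pinching (hp : IsIdempotentElem p) (a : R) :
    Commute p (pinching p a) := by
  rw [Commute, SemiconjBy, hp.pinching_mul_self, pinching, mul_add, ← mul_assoc, ← mul_assoc,
    hp.mul_one_sub_self, zero_mul, zero_mul, zero_add, ← mul_assoc, ← mul_assoc, hp.eq]

end Pinching

namespace ContinuousLinearMap

section BijOn

variable {R M : Type*} [Semiring R] [TopologicalSpace M] [AddCommMonoid M] [Module R M]

theorem mapsTo_range_of_commute {u p : M →L[R] M} (h : Commute u p) :
    MapsTo u (LinearMap.range (p : M →ₗ[R] M)) (LinearMap.range (p : M →ₗ[R] M)) := by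
  rintro _ ⟨y, rfl⟩
  exact ⟨u y, congr($(h.eq.symm) y)⟩

theorem bijOn_range_of_isUnit_of_commute {u p : M →L[R] M} (hu : IsUnit u) (h : Commute u p) :
    BijOn u (LinearMap.range (p : M →ₗ[R] M)) (LinearMap.range (p : M →ₗ[R] M)) := by
  obtain ⟨v, rfl⟩ := hu
  refine InvOn.bijOn ⟨fun x _ => ?_, fun x _ => ?_⟩ (mapsTo_range_of_commute h)
    (mapsTo_range_of_commute h.units_inv_left)
  · exact congr($(v.inv_mul) x)
  · exact congr($(v.mul_inv) x)

end BijOn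

theorem bijOn_range_mul_mul_of_isUnit_pinching {R M : Type*} [Ring R] [TopologicalSpace M]
    [AddCommGroup M] [Module R M] [IsTopologicalAddGroup M] {p a : M →L[R] M}
    (hp : IsIdempotentElem p) (ha : IsUnit (pinching p a)) :
    BijOn (p * a * p) (LinearMap.range (p : M →ₗ[R] M)) (LinearMap.range (p : M →ₗ[R] M)) := by
  refine (bijOn_range_of_isUnit_of_commute ha (hp.commute_pinching a).symm).congr ?_
  rintro _ ⟨y, rfl⟩
  change pinching p a (p y) = (p * a * p) (p y)
  rw [← mul_apply_eq_comp, ← mul_apply_eq_comp, hp.pinching_mul_self, mul_assoc (p * a), hp.eq]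

end ContinuousLinearMap

section Convergence

variable {ι 𝕜 E F G : Type*} [RCLike 𝕜] {l : Filter ι}
  [NormedAddCommGroup E] [NormedSpace 𝕜 E] [NormedAddCommGroup F] [NormedSpace 𝕜 F]
  [NormedAddCommGroup G] [NormedSpace 𝕜 G]

theorem IsCompactOperator.tendsto_comp_zero {K : E →L[𝕜] F} (hK : IsCompactOperator K)
    {T : ι → F →L[𝕜] G} {C : ℝ} (hC : ∀ i, ‖T i‖ ≤ C)
    (hT : ∀ y, Tendsto (fun i => T i y) l (𝓝 0)) :
    Tendsto (fun i => (T i).comp K) l (𝓝 0) := by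
  rw [NormedAddGroup.tendsto_nhds_zero]
  intro ε hε
  set δ := ε / (2 * (|C| + 1)) with hδ_def
  have hδ : 0 < δ := by positivity
  have hCδ : |C| * δ < ε / 2 := by
    rw [hδ_def, mul_div_assoc', div_lt_div_iff₀ (by positivity) two_pos]
    nlinarith [abs_nonneg C]
  obtain ⟨t, ht, hcover⟩ := Metric.totallyBounded_iff.mp
    (hK.isCompact_closure_image_closedBall (f := (K : E →ₗ[𝕜] F)) 1).totallyBounded δ hδ
  have hnet : ∀ᶠ i in l, ∀ y ∈ t, ‖T i y‖ < ε / 2 :=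
    ht.eventually_all.2 fun y _ => NormedAddGroup.tendsto_nhds_zero.1 (hT y) _ (half_pos hε)
  filter_upwards [hnet] with i hi
  refine lt_of_le_of_lt (ContinuousLinearMap.opNorm_le_of_unit_norm (by positivity)
    fun x hx => ?_) (add_lt_of_lt_sub_right (by linarith : |C| * δ < ε - ε / 2))
  obtain ⟨y, hy, hxy⟩ := mem_iUnion₂.mp
    (hcover (subset_closure ⟨x, mem_closedBall_zero_iff.mpr hx.le, rfl⟩))
  calc ‖(T i).comp K x‖ = ‖T i (K x - y) + T i y‖ := by simp
    _ ≤ ‖T i‖ * ‖K x - y‖ + ‖T i y‖ := norm_add_le_of_le ((T i).le_opNorm _) le_rfl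
    _ ≤ |C| * δ + ε / 2 := by
      gcongr
      · exact (hC i).trans (le_abs_self C)
      · exact (mem_ball_iff_norm.mp hxy).le
      · exact (hi y hy).le

end Convergence

section StarProjection

open RCLike ContinuousLinearMap

variable {ι 𝕜 H : Type*} [RCLike 𝕜] {l : Filter ι}
  [NormedAddCommGroup H] [InnerProductSpace 𝕜 H] [CompleteSpace H] {P : ι → H →L[𝕜] H}

theorem IsStarProjection.norm_apply_sq {p : H →L[𝕜] H} (hp : IsStarProjection p) (u : H) :
    ‖p u‖ ^ 2 = re (inner 𝕜 (p u) u) := by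
  rw [apply_norm_sq_eq_inner_adjoint_left, ← star_eq_adjoint, hp.isSelfAdjoint.star_eq]
  exact congr(re (inner 𝕜 ($(hp.isIdempotentElem.eq) u) u))

theorem tendsto_one_sub_apply_of_tendsto_inner (hP : ∀ i, IsStarProjection (P i)) {u : H}
    (hu : Tendsto (fun i => inner 𝕜 (P i u) u) l (𝓝 (inner 𝕜 u u))) :
    Tendsto (fun i => (1 - P i) u) l (𝓝 0) := by
  have hsq : Tendsto (fun i => ‖(1 - P i) u‖ ^ 2) l (𝓝 0) := by
    have h (i : ι) : ‖(1 - P i) u‖ ^ 2 = re (inner 𝕜 u u) - re (inner 𝕜 (P i u) u) := by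
      rw [(hP i).one_sub.norm_apply_sq, sub_apply, one_apply_eq_self, inner_sub_left, map_sub]
    simp_rw [h]
    simpa using ((continuous_re.tendsto _).comp hu).const_sub (re (inner 𝕜 u u))
  rw [tendsto_zero_iff_norm_tendsto_zero]
  simpa using hsq.sqrt

theorem tendsto_pinching_of_isCompactOperator (hP : ∀ i, IsStarProjection (P i))
    (hstrong : ∀ u, Tendsto (fun i => (1 - P i) u) l (𝓝 0)) {K : H →L[𝕜] H}
    (hK : IsCompactOperator K) (hKsa : IsSelfAdjoint K) :
    Tendsto (fun i => pinching (P i) K) l (𝓝 K) := by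
  have hRK : Tendsto (fun i => (1 - P i) * K) l (𝓝 0) :=
    hK.tendsto_comp_zero (fun i => IsStarProjection.norm_le _ (hP i).one_sub) hstrong
  have hKR : Tendsto (fun i => K * (1 - P i)) l (𝓝 0) := by
    simpa [star_mul, hKsa.star_eq, fun i => (hP i).one_sub.isSelfAdjoint.star_eq] using hRK.star
  have hP_bdd : IsBoundedUnder (· ≤ ·) l (norm ∘ P) :=
    isBoundedUnder_of ⟨1, fun i => IsStarProjection.norm_le _ (hP i)⟩
  have hoff : Tendsto (fun i => P i * K * (1 - P i) + (1 - P i) * K * P i) l (𝓝 0) := by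
    simpa only [mul_assoc, add_zero] using
      (isBoundedUnder_le_mul_tendsto_zero hP_bdd hKR).add (hRK.zero_mul_isBoundedUnder_le hP_bdd)
  simpa [pinching_eq_sub] using tendsto_const_nhds.sub hoff

end StarProjection

theorem stmt10_general
    {H : Type*} [NormedAddCommGroup H] [InnerProductSpace ℝ H] [CompleteSpace H]
    (Q : H →L[ℝ] H)
    (K₀ : H →L[ℝ] H) (hKc : IsCompactOperator ⇑K₀) (hKsa : IsSelfAdjoint K₀)
    (L₀ : H →L[ℝ] H) (hL₀ : L₀ = Q + K₀) (hinv : IsUnit L₀)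
    (P : ℕ → H →L[ℝ] H)
    (hPsa : ∀ n, IsSelfAdjoint (P n)) (hPidem : ∀ n, IsIdempotentElem (P n))
    (hPcomm : ∀ n, P n * Q = Q * P n)
    (hPweak : ∀ u v : H, Filter.Tendsto (fun n => ⟪P n u, v⟫) Filter.atTop (nhds ⟪u, v⟫)) :
    ∃ n₀ : ℕ, ∀ n ≥ n₀,
      (∀ s ∈ Set.Icc (0:ℝ) 1,
        IsUnit (s • L₀ + (1 - s) • ((1 - P n) * L₀ * (1 - P n) + P n * L₀ * P n))) ∧
      Set.BijOn (⇑(P n * L₀ * P n))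
        (LinearMap.range (P n : H →ₗ[ℝ] H) : Set H) (LinearMap.range (P n : H →ₗ[ℝ] H) : Set H) := by
  have hP (n : ℕ) : IsStarProjection (P n) := ⟨hPidem n, hPsa n⟩
  have hpinch : Tendsto (fun n => pinching (P n) L₀) atTop (𝓝 L₀) := by
    have hK₀ := tendsto_pinching_of_isCompactOperator hP
      (fun u => tendsto_one_sub_apply_of_tendsto_inner hP (hPweak u u)) hKc hKsa
    simpa only [hL₀, pinching_add, (hPidem _).pinching_eq_self_of_commute (hPcomm _)]
      using hK₀.const_add Q
  obtain ⟨δ, hδ, hunits⟩ := Metric.isOpen_iff.mp Units.isOpen L₀ hinv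
  obtain ⟨n₀, hn₀⟩ := eventually_atTop.mp (hpinch.eventually (ball_mem_nhds L₀ hδ))
  refine ⟨n₀, fun n hn => ⟨fun s hs => ?_, ?_⟩⟩
  · exact hunits (convex_ball L₀ δ (mem_ball_self hδ) (hn₀ n hn) hs.1 (sub_nonneg.2 hs.2)
      (add_sub_cancel s 1))
  · exact ContinuousLinearMap.bijOn_range_mul_mul_of_isUnit_pinching (hPidem n)
      (hunits (hn₀ n hn))

theorem stmt10
    {H : Type*} [NormedAddCommGroup H] [InnerProductSpace ℝ H] [CompleteSpace H]
    [TopologicalSpace.SeparableSpace H]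
    (Q : H →L[ℝ] H) (hQsa : IsSelfAdjoint Q) (hQsq : Q * Q = 1)
    (K₀ : H →L[ℝ] H) (hKc : IsCompactOperator ⇑K₀) (hKsa : IsSelfAdjoint K₀)
    (L₀ : H →L[ℝ] H) (hL₀ : L₀ = Q + K₀) (hinv : IsUnit L₀)
    (P : ℕ → H →L[ℝ] H)
    (hPsa : ∀ n, IsSelfAdjoint (P n)) (hPidem : ∀ n, IsIdempotentElem (P n))
    (hPfin : ∀ n, FiniteDimensional ℝ (LinearMap.range (P n : H →ₗ[ℝ] H)))
    (hPmono : ∀ n, LinearMap.range (P n : H →ₗ[ℝ] H) ≤ LinearMap.range (P (n + 1) : H →ₗ[ℝ] H))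
    (hPcomm : ∀ n, P n * Q = Q * P n)
    (hPweak : ∀ u v : H, Filter.Tendsto (fun n => ⟪P n u, v⟫) Filter.atTop (nhds ⟪u, v⟫)) :
    ∃ n₀ : ℕ, ∀ n ≥ n₀,
      (∀ s ∈ Set.Icc (0:ℝ) 1,
        IsUnit (s • L₀ + (1 - s) • ((1 - P n) * L₀ * (1 - P n) + P n * L₀ * P n))) ∧
      Set.BijOn (⇑(P n * L₀ * P n))
        (LinearMap.range (P n : H →ₗ[ℝ] H) : Set H) (LinearMap.range (P n : H →ₗ[ℝ] H) : Set H) :=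
  stmt10_general Q K₀ hKc hKsa L₀ hL₀ hinv P hPsa hPidem hPcomm hPweak
end
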